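/- There exists a ring R containing two strongly clean elements x and y with x·y = 1 but y·x ≠ 1; i.e., strong cleanness of individual elements does not force them to be two-sided inverses. -/

import Mathlib

/-!
Let `s, t` be elements of a ring with `t * s = 1 ≠ s * t` such that `1 - s` and `1 + s` are units;
multiplication by `X` on `K⟦X⟧` and division by `X` (dropping the constant term) are an example.
In `2 × 2` matrices, `x = !![t, 0; 1 - s * t, 1 + s]` and `y = diagonal ![s, (1 + s)⁻¹]` satisfy
`x * y = 1 ≠ y * x`. Here `y` is strongly clean with idempotent `diagonal ![1, 0]`, because
`s - 1` and `(1 + s)⁻¹` are units, and `x` is strongly clean with idempotent `1`, because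
`x - 1 = !![t - 1, 0; 1 - s * t, s]` has the inverse `!![w * s, w * (1 - s * t); 0, t]`
with `w = (1 - s)⁻¹`.
-/

open Matrix PowerSeries

def IsStronglyClean {R : Type*} [Ring R] (r : R) : Prop :=
  ∃ e u : R, IsIdempotentElem e ∧ IsUnit u ∧ r = e + u ∧ e * u = u * e

namespace IsStronglyClean

variable {R : Type*} [Ring R]

lemma of_isUnit {u : R} (hu : IsUnit u) : IsStronglyClean u :=
  ⟨0, u, .zero, hu, (zero_add u).symm, by rw [zero_mul, mul_zero]⟩

lemma of_isUnit_sub_one {r : R} (hr : IsUnit (r - 1)) : IsStronglyClean r :=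
  ⟨1, r - 1, .one, hr, (add_sub_cancel 1 r).symm, by rw [one_mul, mul_one]⟩

lemma diagonal {n : Type*} [Fintype n] [DecidableEq n] {d : n → R}
    (hd : ∀ i, IsStronglyClean (d i)) : IsStronglyClean (Matrix.diagonal d) := by
  choose e u he hu hdeu hcomm using hd
  refine ⟨Matrix.diagonal e, Matrix.diagonal u, ?_, ?_, ?_, ?_⟩
  · simp only [IsIdempotentElem, diagonal_mul_diagonal]
    exact congrArg _ (funext he)
  · exact (Pi.isUnit_iff.mpr hu).map (diagonalRingHom n R)
  · rw [diagonal_add]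
    exact congrArg _ (funext hdeu)
  · simp only [diagonal_mul_diagonal]
    exact congrArg _ (funext hcomm)

end IsStronglyClean

section

variable {A : Type*} [Ring A] {s t : A}

lemma one_sub_mul_mul_eq_zero_of_mul_eq_one (hts : t * s = 1) : (1 - s * t) * s = 0 := by
  rw [sub_mul, mul_assoc, hts, one_mul, mul_one, sub_self]

lemma Matrix.isUnit_fin_two_of_mul_eq_one (hts : t * s = 1) (hs : IsUnit (1 - s)) :
    IsUnit !![t - 1, 0; 1 - s * t, s] := by
  obtain ⟨w, hw⟩ := hs
  set p := 1 - s * t with hp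
  have hps : p * s = 0 := one_sub_mul_mul_eq_zero_of_mul_eq_one hts
  have htp : t * p = 0 := by rw [mul_sub, ← mul_assoc, hts, one_mul, mul_one, sub_self]
  have hpp : p * p = p := by rw [mul_sub, mul_one, ← mul_assoc, hps, zero_mul, sub_zero]
  have htw : (t - 1) * w⁻¹ = t := by
    rw [show t - 1 = t * w by rw [hw, mul_sub, mul_one, hts], Units.mul_inv_cancel_right]
  have hpw : p * w⁻¹ = p := by
    rw [show p * w⁻¹ = p * w * w⁻¹ by rw [hw, mul_sub, mul_one, hps, sub_zero],
      Units.mul_inv_cancel_right]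
  refine isUnit_iff_exists.mpr ⟨!![w⁻¹ * s, w⁻¹ * p; 0, t], ?_, ?_⟩
  · rw [mul_fin_two, one_fin_two, ← mul_assoc, htw, hts, ← mul_assoc, htw, htp, ← mul_assoc, hpw,
      hps, ← mul_assoc, hpw, hpp]
    simp [p]
  · have h : s * (t - 1) + p * p = w := by rw [hpp, hw, hp, mul_sub, mul_one]; abel
    simp only [mul_fin_two, one_fin_two, mul_assoc, hps, htp, hts, ← mul_add, h, mul_zero,
      zero_mul, add_zero, zero_add, Units.inv_mul]

theorem Matrix.exists_isStronglyClean_mul_eq_one_mul_ne_one (hts : t * s = 1) (hst : s * t ≠ 1)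
    (hsub : IsUnit (1 - s)) (hadd : IsUnit (1 + s)) :
    ∃ x y : Matrix (Fin 2) (Fin 2) A,
      IsStronglyClean x ∧ IsStronglyClean y ∧ x * y = 1 ∧ y * x ≠ 1 := by
  obtain ⟨b, hb⟩ := hadd
  refine ⟨!![t, 0; 1 - s * t, 1 + s], diagonal ![s, ↑b⁻¹], ?_, ?_, ?_, ?_⟩
  · refine .of_isUnit_sub_one ?_
    convert isUnit_fin_two_of_mul_eq_one hts hsub using 1
    rw [one_fin_two]
    ext i j
    fin_cases i <;> fin_cases j <;> simp
  · refine .diagonal fun i ↦ ?_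
    fin_cases i
    · exact .of_isUnit_sub_one (by rw [← neg_sub]; exact hsub.neg)
    · exact .of_isUnit b⁻¹.isUnit
  · simp [diagonal_fin_two, one_fin_two, hts,
      one_sub_mul_mul_eq_zero_of_mul_eq_one hts, ← hb]
  · intro h
    apply hst
    simpa [diagonal_fin_two, mul_fin_two, one_fin_two] using congrFun (congrFun h 0) 0

end

noncomputable def PowerSeries.divX (K : Type*) [CommRing K] : K⟦X⟧ →ₗ[K] K⟦X⟧ where
  toFun φ := mk fun n ↦ coeff (n + 1) φ
  map_add' φ ψ := by ext; simp
  map_smul' c φ := by ext; simp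

namespace PowerSeries

variable {K : Type*} [CommRing K]

@[simp] lemma divX_X_mul (φ : K⟦X⟧) : divX K (X * φ) = φ := by
  ext n; simp [divX, coeff_succ_X_mul]

@[simp] lemma divX_one : divX K 1 = 0 := by
  ext n; simp [divX, coeff_one]

lemma divX_mul_lmul_X : divX K * Algebra.lmul K K⟦X⟧ X = 1 := by
  ext φ : 1; simp

lemma lmul_X_mul_divX_ne_one [Nontrivial K] : Algebra.lmul K K⟦X⟧ X * divX K ≠ 1 := by
  intro h
  simpa using LinearMap.congr_fun h 1

lemma isUnit_one_sub_lmul_X : IsUnit (1 - Algebra.lmul K K⟦X⟧ X) := by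
  rw [← map_one (Algebra.lmul K K⟦X⟧), ← map_sub]
  exact (isUnit_iff_constantCoeff.mpr (by simp)).map _

lemma isUnit_one_add_lmul_X : IsUnit (1 + Algebra.lmul K K⟦X⟧ X) := by
  rw [← map_one (Algebra.lmul K K⟦X⟧), ← map_add]
  exact (isUnit_iff_constantCoeff.mpr (by simp)).map _

end PowerSeries

/-- There is a ring `R` with strongly clean elements `x`, `y` such that
`x * y = 1` but `y * x ≠ 1`. -/
theorem stmt8 :
    ∃ (R : Type) (_ : Ring R) (x y : R),
      (∃ e u : R, IsIdempotentElem e ∧ IsUnit u ∧ x = e + u ∧ e * u = u * e) ∧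
      (∃ e u : R, IsIdempotentElem e ∧ IsUnit u ∧ y = e + u ∧ e * u = u * e) ∧
      x * y = 1 ∧ y * x ≠ 1 := by
  obtain ⟨x, y, hx, hy, hxy, hyx⟩ := Matrix.exists_isStronglyClean_mul_eq_one_mul_ne_one
    divX_mul_lmul_X lmul_X_mul_divX_ne_one isUnit_one_sub_lmul_X (isUnit_one_add_lmul_X (K := ℚ))
  exact ⟨_, inferInstance, x, y, hx, hy, hxy, hyx⟩
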